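/- arXiv:1202.0888 — 2 statements merged into one kernel-verified Lean document; each statement's English description precedes it below -/
import Mathlib

section
/- The inverse of the map F : NC_{1<2}(m) → NC_{≥2}(m) is given by the following procedure: for every block B of size at least three, remove all elements of B except its minimum and maximum and place each removed element into its own singleton block. Applying this procedure to F(π) recovers π. -/
namespace JM

/-- A collection of sets is a partition of `Fin m`. -/
def IsPartitionOn {m : ℕ} (π : Set (Set (Fin m))) : Prop :=
  (∀ B ∈ π, B.Nonempty) ∧ (∀ x : Fin m, ∃ B ∈ π, x ∈ B) ∧
  (∀ B ∈ π, ∀ B' ∈ π, (B ∩ B').Nonempty → B = B')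

/-- The partition is non-crossing. -/
def Noncrossing {m : ℕ} (π : Set (Set (Fin m))) : Prop :=
  ∀ B ∈ π, ∀ B' ∈ π, B ≠ B' →
    ¬ ∃ k1 l1 k2 l2 : Fin m, k1 < l1 ∧ l1 < k2 ∧ k2 < l2 ∧
      k1 ∈ B ∧ k2 ∈ B ∧ l1 ∈ B' ∧ l2 ∈ B'

/-- `B` is an inner block of `B'`. -/
def Inner {m : ℕ} (B B' : Set (Fin m)) : Prop :=
  (∃ p ∈ B', ∀ b ∈ B, p < b) ∧ (∃ q ∈ B', ∀ b ∈ B, b < q)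

/-- `B` is a direct inner block of `B''` in π. -/
def DirectInner {m : ℕ} (π : Set (Set (Fin m))) (B B'' : Set (Fin m)) : Prop :=
  Inner B B'' ∧ ¬ ∃ B' ∈ π, Inner B B' ∧ Inner B' B''

/-- Non-crossing partitions with blocks of size 1 or 2, each singleton inner to a 2-block. -/
def NC1lt2 (m : ℕ) : Set (Set (Set (Fin m))) :=
  {π | IsPartitionOn π ∧ Noncrossing π ∧ (∀ B ∈ π, B.ncard = 1 ∨ B.ncard = 2) ∧
    ∀ B ∈ π, B.ncard = 1 → ∃ B' ∈ π, B'.ncard = 2 ∧ Inner B B'}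

/-- Non-crossing partitions all of whose blocks have size at least two. -/
def NCge2 (m : ℕ) : Set (Set (Set (Fin m))) :=
  {π | IsPartitionOn π ∧ Noncrossing π ∧ ∀ B ∈ π, 2 ≤ B.ncard}

/-- The merging map `F`: each 2-block is merged with its direct inner singletons. -/
def Fmap {m : ℕ} (π : Set (Set (Fin m))) : Set (Set (Fin m)) :=
  {C | ∃ B ∈ π, B.ncard = 2 ∧
    C = B ∪ {x | ∃ S ∈ π, S = {x} ∧ DirectInner π S B}}

/-- The splitting map `G`: from each block of size at least 3, every element except the
minimum and the maximum is placed in its own singleton block. -/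
def Gmap {m : ℕ} (π : Set (Set (Fin m))) : Set (Set (Fin m)) :=
  {C | (∃ B ∈ π, B.ncard ≤ 2 ∧ C = B) ∨
    (∃ B ∈ π, 3 ≤ B.ncard ∧ ∃ x ∈ B, (∃ y ∈ B, y < x) ∧ (∃ z ∈ B, x < z) ∧ C = {x}) ∨
    (∃ B ∈ π, 3 ≤ B.ncard ∧ ∃ y ∈ B, ∃ z ∈ B,
      (∀ b ∈ B, y ≤ b) ∧ (∀ b ∈ B, b ≤ z) ∧ C = {y, z})}

/-- Minimal number of transpositions needed to write σ as a product. -/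
noncomputable def permLength {β : Type*} [DecidableEq β] [Fintype β] (σ : Equiv.Perm β) : ℕ :=
  sInf {k | ∃ l : List (Equiv.Perm β), l.length = k ∧ (∀ t ∈ l, t.IsSwap) ∧ l.prod = σ}

/-- The element 2n+1 of {1,…,2n+1}. -/
def jmTop (n : ℕ) : Fin (2*n+1) := Fin.last (2*n)

/-- The tuple of Jucys-Murphy transpositions (αᵢ, 2n+1). -/
def jmTuple {n m : ℕ} (α : Fin m → Fin (2*n+1)) : Fin m → Equiv.Perm (Fin (2*n+1)) :=
  fun i => Equiv.swap (α i) (jmTop n)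

/-- The partition of indices grouping equal values of α. -/
def eqPartition {m : ℕ} {β : Type*} (α : Fin m → β) : Set (Set (Fin m)) :=
  {B | ∃ j : Fin m, B = {i | α i = α j}}

/-- A partition respects a two-coloring. -/
def Respects {m : ℕ} (π : Set (Set (Fin m))) (c : Fin m → Bool) : Prop :=
  ∀ B ∈ π, ∀ i ∈ B, ∀ j ∈ B, c i = c j

/-- Membership in the subgroup S_n × S_n × {e} of S_{2n+1}. -/
def InH (n : ℕ) (σ : Equiv.Perm (Fin (2*n+1))) : Prop :=
  (∀ x : Fin (2*n+1), (x:ℕ) < n → ((σ x : Fin (2*n+1)) : ℕ) < n) ∧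
  (∀ x : Fin (2*n+1), n ≤ (x:ℕ) → (x:ℕ) < 2*n →
    n ≤ ((σ x : Fin (2*n+1)) : ℕ) ∧ ((σ x : Fin (2*n+1)) : ℕ) < 2*n) ∧
  σ (jmTop n) = jmTop n

def e1 (n : ℕ) : Fin n ≃ {x : Fin (2*n+1) // (x:ℕ) < n} where
  toFun i := ⟨⟨i, by omega⟩, i.isLt⟩
  invFun x := ⟨(x.1 : ℕ), x.2⟩
  left_inv i := rfl
  right_inv x := rfl

def e2 (n : ℕ) : Fin n ≃ {x : Fin (2*n+1) // n ≤ (x:ℕ) ∧ (x:ℕ) < 2*n} where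
  toFun i := ⟨⟨n + i, by omega⟩, by simp only [Fin.val_mk]; omega⟩
  invFun x := ⟨(x.1 : ℕ) - n, by have := x.2; omega⟩
  left_inv i := by ext; simp
  right_inv x := by
    rcases x with ⟨x, hx⟩
    exact Subtype.ext (Fin.ext (by simp; omega))

/-- Embed a permutation of `Fin n` as a permutation of `Fin (2n+1)` acting on {1,…,n}. -/
def lift1 {n : ℕ} (τ : Equiv.Perm (Fin n)) : Equiv.Perm (Fin (2*n+1)) :=
  τ.extendDomain (e1 n)

/-- Embed a permutation of `Fin n` as a permutation of `Fin (2n+1)` acting on {n+1,…,2n}. -/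
def lift2 {n : ℕ} (τ : Equiv.Perm (Fin n)) : Equiv.Perm (Fin (2*n+1)) :=
  τ.extendDomain (e2 n)

section Aux

variable {m : ℕ}

lemma inner_singleton_iff {a b x : Fin m} (hab : a < b) :
    Inner ({x} : Set (Fin m)) {a, b} ↔ a < x ∧ x < b := by
  constructor
  · rintro ⟨⟨p, hp, hpx⟩, ⟨q, hq, hqx⟩⟩
    have h1 := hpx x rfl
    have h2 := hqx x rfl
    simp only [Set.mem_insert_iff, Set.mem_singleton_iff] at hp hq
    simp only [Fin.lt_def] at *
    omega
  · rintro ⟨h1, h2⟩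
    refine ⟨⟨a, by simp, ?_⟩, ⟨b, by simp, ?_⟩⟩ <;>
      · rintro y rfl; assumption

lemma inner_pair_iff {a b c d : Fin m} (hab : a < b) (hcd : c < d) :
    Inner ({c, d} : Set (Fin m)) {a, b} ↔ a < c ∧ d < b := by
  constructor
  · rintro ⟨⟨p, hp, hpx⟩, ⟨q, hq, hqx⟩⟩
    have h1 := hpx c (by simp)
    have h2 := hpx d (by simp)
    have h3 := hqx c (by simp)
    have h4 := hqx d (by simp)
    simp only [Set.mem_insert_iff, Set.mem_singleton_iff] at hp hq
    simp only [Fin.lt_def] at *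
    omega
  · rintro ⟨h1, h2⟩
    refine ⟨⟨a, by simp, ?_⟩, ⟨b, by simp, ?_⟩⟩ <;>
      · rintro y hy
        simp only [Set.mem_insert_iff, Set.mem_singleton_iff] at hy
        rcases hy with rfl | rfl
        · simp only [Fin.lt_def] at *; omega
        · simp only [Fin.lt_def] at *; omega

lemma not_inner_singleton_singleton {x y : Fin m} :
    ¬ Inner ({x} : Set (Fin m)) {y} := by
  rintro ⟨⟨p, hp, hpx⟩, ⟨q, hq, hqx⟩⟩
  simp only [Set.mem_singleton_iff] at hp hq
  subst hp; subst hq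
  exact absurd (lt_trans (hpx x rfl) (hqx x rfl)) (lt_irrefl _)

lemma two_block_repr {B : Set (Fin m)} (h : B.ncard = 2) :
    ∃ a b : Fin m, a < b ∧ B = {a, b} := by
  obtain ⟨a, b, hne, rfl⟩ := Set.ncard_eq_two.mp h
  rcases lt_or_gt_of_ne hne with h' | h'
  · exact ⟨a, b, h', rfl⟩
  · exact ⟨b, a, h', Set.pair_comm a b⟩

/-- Every singleton of `π` is direct inner to some 2-block. -/
lemma exists_direct {π : Set (Set (Fin m))} (hπ : π ∈ NC1lt2 m) {x : Fin m}
    (hx : ({x} : Set (Fin m)) ∈ π) :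
    ∃ a b : Fin m, a < b ∧ ({a, b} : Set (Fin m)) ∈ π ∧ a < x ∧ x < b ∧
      DirectInner π {x} {a, b} := by
  obtain ⟨hpart, hnc, hsz, hsing⟩ := hπ
  obtain ⟨B', hB'mem, hB'2, hI⟩ := hsing {x} hx (by simp)
  obtain ⟨a0, b0, hab0, rfl⟩ := two_block_repr hB'2
  rw [inner_singleton_iff hab0] at hI
  set T : Set ℕ :=
    {k | ∃ a b : Fin m, a < b ∧ ({a, b} : Set (Fin m)) ∈ π ∧ a < x ∧ x < b ∧
      (b : ℕ) - (a : ℕ) = k} with hT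
  have hTne : T.Nonempty := ⟨(b0 : ℕ) - (a0 : ℕ), a0, b0, hab0, hB'mem, hI.1, hI.2, rfl⟩
  obtain ⟨a, b, hab, hmem, hax, hxb, hk⟩ := Nat.sInf_mem hTne
  refine ⟨a, b, hab, hmem, hax, hxb, (inner_singleton_iff hab).mpr ⟨hax, hxb⟩, ?_⟩
  rintro ⟨B', hB'mem, hI1, hI2⟩
  rcases hsz B' hB'mem with h1 | h2
  · obtain ⟨y, rfl⟩ := Set.ncard_eq_one.mp h1
    exact not_inner_singleton_singleton hI1
  · obtain ⟨c, d, hcd, rfl⟩ := two_block_repr h2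
    rw [inner_singleton_iff hcd] at hI1
    rw [inner_pair_iff hab hcd] at hI2
    have hle : sInf T ≤ (d : ℕ) - (c : ℕ) :=
      Nat.sInf_le ⟨c, d, hcd, hB'mem, hI1.1, hI1.2, rfl⟩
    rw [← hk] at hle
    simp only [Fin.lt_def] at hab hcd hI2
    omega

/-- Elements of the merged set attached to a 2-block `{a,b}` lie strictly between `a` and `b`. -/
lemma mem_S_between {π : Set (Set (Fin m))} {a b x : Fin m} (hab : a < b)
    (hx : x ∈ {x | ∃ S ∈ π, S = {x} ∧ DirectInner π S ({a, b} : Set (Fin m))}) :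
    a < x ∧ x < b := by
  obtain ⟨S, hS, hSx, hdi⟩ := hx
  subst hSx
  exact (inner_singleton_iff hab).mp hdi.1

lemma mem_merged_bounds {π : Set (Set (Fin m))} {a b : Fin m} (hab : a < b) :
    ∀ w ∈ ({a, b} : Set (Fin m)) ∪
      {x | ∃ S ∈ π, S = {x} ∧ DirectInner π S ({a, b} : Set (Fin m))},
      a ≤ w ∧ w ≤ b := by
  rintro w (hw | hw)
  · rcases hw with rfl | hw
    · exact ⟨le_refl _, le_of_lt hab⟩
    · rw [Set.mem_singleton_iff] at hw; subst hw
      exact ⟨le_of_lt hab, le_refl _⟩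
  · obtain ⟨h1, h2⟩ := mem_S_between hab hw
    exact ⟨le_of_lt h1, le_of_lt h2⟩

end Aux

/-- The splitting procedure G recovers π from F(π). -/
theorem G_inverse_of_F (m : ℕ) (π : Set (Set (Fin m))) (hπ : π ∈ NC1lt2 m) :
    Gmap (Fmap π) = π := by
  obtain ⟨hpart, hnc, hsz, hsing⟩ := id hπ
  ext C
  simp only [Gmap, Fmap, Set.mem_setOf_eq]
  constructor
  · rintro (⟨D, ⟨B, hB, hB2, rfl⟩, hDle, rfl⟩ |
      ⟨D, ⟨B, hB, hB2, rfl⟩, hD3, x, hxD, ⟨y, hy, hyx⟩, ⟨z, hz, hxz⟩, rfl⟩ |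
      ⟨D, ⟨B, hB, hB2, rfl⟩, hD3, y, hy, z, hz, hymin, hzmax, rfl⟩)
    · -- small block: the merged block equals the original 2-block
      have heq := Set.eq_of_subset_of_ncard_le (Set.subset_union_left
        (s := B) (t := {x | ∃ S ∈ π, S = {x} ∧ DirectInner π S B}))
        (by rw [hB2]; exact hDle) (Set.toFinite _)
      rw [← heq]; exact hB
    · -- singleton from a big block
      obtain ⟨a, b, hab, rfl⟩ := two_block_repr hB2
      have hbnd := mem_merged_bounds (π := π) hab
      have hax : a < x := lt_of_le_of_lt (hbnd y hy).1 hyx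
      have hxb : x < b := lt_of_lt_of_le hxz (hbnd z hz).2
      rcases hxD with hx' | hx'
      · rcases hx' with rfl | hx'
        · exact absurd hax (lt_irrefl _)
        · rw [Set.mem_singleton_iff] at hx'; subst hx'
          exact absurd hxb (lt_irrefl _)
      · obtain ⟨S, hS, hSx, _⟩ := hx'
        rw [hSx] at hS; exact hS
    · -- pair block of a big block is the original 2-block
      obtain ⟨a, b, hab, rfl⟩ := two_block_repr hB2
      have hbnd := mem_merged_bounds (π := π) hab
      have haD : a ∈ ({a, b} : Set (Fin m)) ∪
          {x | ∃ S ∈ π, S = {x} ∧ DirectInner π S ({a, b} : Set (Fin m))} :=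
        Or.inl (Or.inl rfl)
      have hbD : b ∈ ({a, b} : Set (Fin m)) ∪
          {x | ∃ S ∈ π, S = {x} ∧ DirectInner π S ({a, b} : Set (Fin m))} :=
        Or.inl (Or.inr rfl)
      have hya : y = a := le_antisymm (hymin a haD) (hbnd y hy).1
      have hzb : z = b := le_antisymm (hbnd z hz).2 (hzmax b hbD)
      rw [hya, hzb]; exact hB
  · intro hC
    rcases hsz C hC with h1 | h2
    · -- C is a singleton
      obtain ⟨x, rfl⟩ := Set.ncard_eq_one.mp h1
      obtain ⟨a, b, hab, hABπ, hax, hxb, hdi⟩ := exists_direct hπ hC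
      set S : Set (Fin m) :=
        {w | ∃ S ∈ π, S = {w} ∧ DirectInner π S ({a, b} : Set (Fin m))} with hS
      have hxS : x ∈ S := ⟨{x}, hC, rfl, hdi⟩
      have hxD : x ∈ ({a, b} : Set (Fin m)) ∪ S := Or.inr hxS
      have haD : a ∈ ({a, b} : Set (Fin m)) ∪ S := Or.inl (Or.inl rfl)
      have hbD : b ∈ ({a, b} : Set (Fin m)) ∪ S := Or.inl (Or.inr rfl)
      have hsub : ({a, x, b} : Set (Fin m)) ⊆ ({a, b} : Set (Fin m)) ∪ S := by
        rintro w (rfl | rfl | hw)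
        · exact haD
        · exact hxD
        · rw [Set.mem_singleton_iff] at hw; subst hw; exact hbD
      have h3 : ({a, x, b} : Set (Fin m)).ncard = 3 :=
        Set.ncard_eq_three.mpr ⟨a, x, b, ne_of_lt hax, ne_of_lt hab, ne_of_lt hxb, rfl⟩
      have hD3 : 3 ≤ (({a, b} : Set (Fin m)) ∪ S).ncard := by
        rw [← h3]; exact Set.ncard_le_ncard hsub (Set.toFinite _)
      exact Or.inr (Or.inl ⟨_, ⟨{a, b}, hABπ, Set.ncard_pair (ne_of_lt hab), rfl⟩,
        hD3, x, hxD, ⟨a, haD, hax⟩, ⟨b, hbD, hxb⟩, rfl⟩)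
    · -- C is a 2-block
      obtain ⟨a, b, hab, rfl⟩ := two_block_repr h2
      set S : Set (Fin m) :=
        {w | ∃ S ∈ π, S = {w} ∧ DirectInner π S ({a, b} : Set (Fin m))} with hS
      have hDF : ∃ B ∈ π, B.ncard = 2 ∧
          ({a, b} : Set (Fin m)) ∪ S = B ∪ {x | ∃ S ∈ π, S = {x} ∧ DirectInner π S B} :=
        ⟨{a, b}, hC, Set.ncard_pair (ne_of_lt hab), rfl⟩
      by_cases h : (({a, b} : Set (Fin m)) ∪ S).ncard ≤ 2
      · refine Or.inl ⟨_, hDF, h, ?_⟩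
        exact Set.eq_of_subset_of_ncard_le Set.subset_union_left
          (by rw [Set.ncard_pair (ne_of_lt hab)]; exact h) (Set.toFinite _)
      · have hbnd := mem_merged_bounds (π := π) hab
        have haD : a ∈ ({a, b} : Set (Fin m)) ∪ S := Or.inl (Or.inl rfl)
        have hbD : b ∈ ({a, b} : Set (Fin m)) ∪ S := Or.inl (Or.inr rfl)
        exact Or.inr (Or.inr ⟨_, hDF, by omega, a, haD, b, hbD,
          fun w hw => (hbnd w hw).1, fun w hw => (hbnd w hw).2, rfl⟩)

end JM
end

section
/- Let a_1,...,a_m be transpositions a_i = (α_i, 2n+1) in S_{2n+1} whose associated equality partition π lies in NC_{1,2}(m), with all the α corresponding to distinct blocks being distinct. Let i_1 < i_2 < ... < i_k be the elements of the non-inner singleton blocks of π. Then the product a_1⋯a_m maps 2n+1 to α_{i_k}, maps α_{i_j} to α_{i_{j-1}} for 2 ≤ j ≤ k, and maps α_{i_1} to 2n+1; in other words, (2n+1, α_{i_k}, ..., α_{i_1}) is a cycle of the product. -/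
namespace JM

/-!
Read the product of the transpositions `(α j, N)` from right to left and follow a point.
A point `y ≠ N` moves only at a transposition `(y, N)`, so the value of a singleton block is
sent to `N` at its own position and is left alone by everything to its right. Starting from `N`
at a gap that no pair straddles, a pair `a … a` turns `N` into `a` and back into `N`, while the
singletons nested inside it do not touch `a`; hence `N` passes through pairs unchanged and is
first caught by the nearest non-inner singleton to its left, whose value it then keeps.
-/

section Blocks

variable {β : Type*} {m : ℕ}

def IsCut (α : Fin m → β) (i : ℕ) : Prop :=
  ∀ p r : Fin m, (p : ℕ) < i → i ≤ (r : ℕ) → α p ≠ α r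

def IsNonInnerSingleton (α : Fin m → β) (i : Fin m) : Prop :=
  (∀ j, α j = α i → j = i) ∧ ¬ ∃ p r : Fin m, p < i ∧ i < r ∧ p ≠ r ∧ α p = α r

def AtMostTwice (α : Fin m → β) : Prop :=
  ∀ i j k : Fin m, i < j → j < k → α i = α j → α j ≠ α k

def PairsNoncrossing (α : Fin m → β) : Prop :=
  ∀ p q r t : Fin m, p < q → q < r → r < t → α p = α r → α q ≠ α t

variable {α : Fin m → β}

lemma atMostTwice_of_eqPartition (h : ∀ B ∈ eqPartition α, B.ncard ≤ 2) :
    AtMostTwice α := by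
  intro i j k hij hjk hi hj
  have hsub : ({i, j, k} : Set (Fin m)) ⊆ {x | α x = α i} := by
    rintro x (rfl | rfl | rfl)
    · rfl
    · exact hi.symm
    · exact (hi.trans hj).symm
  have := Set.ncard_le_ncard hsub (Set.toFinite _)
  rw [Set.ncard_eq_three.2 ⟨i, j, k, hij.ne, (hij.trans hjk).ne, hjk.ne, rfl⟩] at this
  have := h _ ⟨i, rfl⟩
  omega

lemma pairsNoncrossing_of_noncrossing (hT : AtMostTwice α) (hnc : Noncrossing (eqPartition α)) :
    PairsNoncrossing α := by
  intro p q r t hpq hqr hrt hpr hqt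
  by_cases hpq' : α p = α q
  · exact hT p q r hpq hqr hpq' (hpq' ▸ hpr)
  refine hnc _ ⟨p, rfl⟩ _ ⟨q, rfl⟩ (fun hB => hpq' ?_)
    ⟨p, q, r, t, hpq, hqr, hrt, rfl, hpr.symm, rfl, hqt.symm⟩
  have : q ∈ {x | α x = α q} := rfl
  rw [← hB] at this
  exact this.symm

lemma IsNonInnerSingleton.isCut {i : Fin m} (hi : IsNonInnerSingleton α i) : IsCut α i := by
  intro p r hp hr hpr
  rcases (Nat.lt_or_eq_of_le hr).symm with hr | hr
  · exact (Fin.ne_of_lt (Fin.lt_def.2 hp)) (hi.1 p (hpr.trans (congrArg α (Fin.ext hr)).symm))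
  · exact hi.2 ⟨p, r, hp, hr, (Fin.lt_def.2 (hp.trans hr)).ne, hpr⟩

lemma IsNonInnerSingleton.isCut_succ {i : Fin m} (hi : IsNonInnerSingleton α i) :
    IsCut α (i + 1) := by
  intro p r hp hr hpr
  rcases Nat.lt_or_eq_of_le (Nat.le_of_lt_succ hp) with hp | hp
  · exact hi.2 ⟨p, r, hp, by simp only [Fin.lt_def]; omega,
      by simp only [ne_eq, Fin.ext_iff]; omega, hpr⟩
  · have := hi.1 r (hpr.symm.trans (congrArg α (Fin.ext hp)))
    simp only [Fin.ext_iff] at this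
    omega

lemma isCut_of_le {i : ℕ} (h : m ≤ i) : IsCut α i :=
  fun _ r _ hr => absurd (r.isLt.trans_le h) (not_lt.2 hr)

lemma IsCut.of_pair (hT : AtMostTwice α) (hX : PairsNoncrossing α) {j q : Fin m} (hjq : j < q)
    (heq : α j = α q) (hcut : IsCut α (q + 1)) : IsCut α j := by
  intro p r hp hr hpr
  have hp : p < j := Fin.lt_def.2 hp
  rcases (Nat.lt_or_eq_of_le hr).symm with hr | hr
  · exact hT p j q hp hjq (hpr.trans (congrArg α (Fin.ext hr)).symm) heq
  rcases lt_trichotomy r q with hrq | rfl | hrq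
  · exact hX p j r q hp (Fin.lt_def.2 hr) hrq hpr heq
  · exact hT p j r hp hjq (hpr.trans heq.symm) heq
  · exact hcut p r (by simp only [Fin.lt_def] at hp hjq; omega) hrq hpr

end Blocks

section SwapProducts

variable {β : Type*} [DecidableEq β] {m : ℕ}

def swapProd (N : β) (α : Fin m → β) : Equiv.Perm β :=
  (List.ofFn fun j => Equiv.swap (α j) N).prod

def prefixSwapProd (N : β) (α : Fin m → β) (i : ℕ) : Equiv.Perm β :=
  ((List.ofFn fun j => Equiv.swap (α j) N).take i).prod

variable {N : β} {α : Fin m → β}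

lemma prefixSwapProd_zero : prefixSwapProd N α 0 = 1 := by
  simp [prefixSwapProd]

lemma prefixSwapProd_of_le {i : ℕ} (h : m ≤ i) : prefixSwapProd N α i = swapProd N α := by
  rw [prefixSwapProd, List.take_of_length_le (by simpa using h), swapProd]

lemma prefixSwapProd_succ (j : Fin m) :
    prefixSwapProd N α (j + 1) = prefixSwapProd N α j * Equiv.swap (α j) N := by
  rw [prefixSwapProd, List.prod_take_succ _ _ (by simp), List.getElem_ofFn]
  rfl

lemma prefixSwapProd_succ_apply_top (j : Fin m) :
    prefixSwapProd N α (j + 1) N = prefixSwapProd N α j (α j) := by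
  rw [prefixSwapProd_succ, Equiv.Perm.mul_apply, Equiv.swap_apply_right]

lemma prefixSwapProd_succ_apply_self (j : Fin m) :
    prefixSwapProd N α (j + 1) (α j) = prefixSwapProd N α j N := by
  rw [prefixSwapProd_succ, Equiv.Perm.mul_apply, Equiv.swap_apply_left]

lemma prefixSwapProd_apply_of_forall_ne {y : β} (hy : y ≠ N) {p i : ℕ} (hpi : p ≤ i)
    (him : i ≤ m)     (h : ∀ j : Fin m, p ≤ j → (j : ℕ) < i → α j ≠ y) :
    prefixSwapProd N α i y = prefixSwapProd N α p y := by
  induction i, hpi using Nat.le_induction with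
  | base => rfl
  | succ i hpi ih =>
    have hj := h ⟨i, by omega⟩ hpi (Nat.lt_succ_self i)
    rw [prefixSwapProd_succ (j := ⟨i, by omega⟩), Equiv.Perm.mul_apply,
      Equiv.swap_apply_of_ne_of_ne hj.symm hy,
      ih (by omega) fun j hj₁ hj₂ => h j hj₁ (by omega)]

/-- Between two cuts with no non-inner singleton in between, every pair `a … a` contributes
`swap a N * (swaps of the nested singletons) * swap a N`, which fixes `N`. -/
lemma prefixSwapProd_apply_top_of_isCut (hN : ∀ j, α j ≠ N) (hT : AtMostTwice α)
    (hX : PairsNoncrossing α) {p i : ℕ} (hpi : p ≤ i) (him : i ≤ m) (hp : IsCut α p)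
    (hi : IsCut α i)
    (hfree : ∀ j : Fin m, p ≤ j → (j : ℕ) < i → ¬ IsNonInnerSingleton α j) :
    prefixSwapProd N α i N = prefixSwapProd N α p N := by
  induction i using Nat.strong_induction_on with
  | _ i ih =>
  rcases Nat.eq_or_lt_of_le hpi with rfl | hpi
  · rfl
  obtain ⟨q', rfl⟩ : ∃ q' : Fin m, i = q' + 1 :=
    ⟨⟨i - 1, by omega⟩, by simp only; omega⟩
  have hq := hfree q' (by omega) (Nat.lt_succ_self q')
  by_cases huniq : ∀ j, α j = α q' → j = q'
  · obtain ⟨p', r', hp', hr', -, hpr'⟩ := not_not.1 fun h => hq ⟨huniq, h⟩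
    exact absurd hpr' (hi p' r' (Nat.lt_succ_of_lt hp') hr')
  push Not at huniq
  obtain ⟨j, heq, hne⟩ := huniq
  have hjq : j < q' := (lt_or_gt_of_ne hne).resolve_right fun h =>
    hi q' j (Nat.lt_succ_self q') h heq.symm
  have hpj : p ≤ j := not_lt.1 fun h => hp j q' h (by omega) heq
  calc prefixSwapProd N α (q' + 1) N = prefixSwapProd N α q' (α q') :=
        prefixSwapProd_succ_apply_top q'
    _ = prefixSwapProd N α (j + 1) (α q') :=
        prefixSwapProd_apply_of_forall_ne (hN q') hjq (by omega) fun x hx₁ hx₂ hx =>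
          hT j x q' (Nat.lt_of_succ_le hx₁) hx₂ (heq.trans hx.symm) hx
    _ = prefixSwapProd N α j N := heq ▸ prefixSwapProd_succ_apply_self j
    _ = prefixSwapProd N α p N := ih j (by omega) hpj (by omega)
        (IsCut.of_pair hT hX hjq heq hi) fun x hx₁ hx₂ => hfree x hx₁ (by omega)

lemma IsNonInnerSingleton.prefixSwapProd_succ_apply_top (hN : ∀ j, α j ≠ N) {i : Fin m}
    (hi : IsNonInnerSingleton α i) : prefixSwapProd N α (i + 1) N = α i := by
  rw [JM.prefixSwapProd_succ_apply_top, prefixSwapProd_apply_of_forall_ne (hN i) (Nat.zero_le _)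
    i.isLt.le fun j _ hj heq => (Fin.lt_def.2 hj).ne (hi.1 j heq), prefixSwapProd_zero,
    Equiv.Perm.one_apply]

lemma IsNonInnerSingleton.swapProd_apply (hN : ∀ j, α j ≠ N) {i : Fin m}
    (hi : IsNonInnerSingleton α i) : swapProd N α (α i) = prefixSwapProd N α i N := by
  rw [← prefixSwapProd_of_le le_rfl, prefixSwapProd_apply_of_forall_ne (hN i) i.isLt le_rfl
    fun j hj _ heq => (Fin.lt_def.2 hj).ne' (hi.1 j heq), prefixSwapProd_succ_apply_self]

theorem swapProd_apply_top_of_last (hN : ∀ j, α j ≠ N) (hT : AtMostTwice α)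
    (hX : PairsNoncrossing α) {i : Fin m} (hi : IsNonInnerSingleton α i)
    (hlast : ∀ x, i < x → ¬ IsNonInnerSingleton α x) : swapProd N α N = α i := by
  rw [← prefixSwapProd_of_le le_rfl, prefixSwapProd_apply_top_of_isCut hN hT hX i.isLt le_rfl
    hi.isCut_succ (isCut_of_le le_rfl) fun x hx _ => hlast x (Fin.lt_def.2 hx),
    hi.prefixSwapProd_succ_apply_top hN]

theorem swapProd_apply_of_consecutive (hN : ∀ j, α j ≠ N) (hT : AtMostTwice α)
    (hX : PairsNoncrossing α) {i i' : Fin m} (hi : IsNonInnerSingleton α i)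
    (hi' : IsNonInnerSingleton α i') (hii' : i < i')
    (hbetween : ∀ x, i < x → x < i' → ¬ IsNonInnerSingleton α x) :
    swapProd N α (α i') = α i := by
  rw [hi'.swapProd_apply hN, prefixSwapProd_apply_top_of_isCut hN hT hX hii' i'.isLt.le
    hi.isCut_succ hi'.isCut fun x hx₁ hx₂ => hbetween x hx₁ hx₂,
    hi.prefixSwapProd_succ_apply_top hN]

theorem swapProd_apply_of_first (hN : ∀ j, α j ≠ N) (hT : AtMostTwice α)
    (hX : PairsNoncrossing α) {i : Fin m} (hi : IsNonInnerSingleton α i)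
    (hfirst : ∀ x, x < i → ¬ IsNonInnerSingleton α x) : swapProd N α (α i) = N := by
  rw [hi.swapProd_apply hN, prefixSwapProd_apply_top_of_isCut hN hT hX (Nat.zero_le _) i.isLt.le
    (fun _ _ h => absurd h (Nat.not_lt_zero _)) hi.isCut fun x _ hx => hfirst x hx,
    prefixSwapProd_zero, Equiv.Perm.one_apply]

end SwapProducts

/-- the cycle of the product through 2n+1 is (2n+1, α_{i_k}, …, α_{i_1})
where i_1 < … < i_k enumerate the non-inner singleton blocks. -/
theorem top_cycle (n m k : ℕ) (α : Fin m → Fin (2*n+1))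
    (hα : ∀ i, α i ≠ jmTop n)
    (hnc : Noncrossing (eqPartition α))
    (hsize : ∀ B ∈ eqPartition α, B.ncard = 1 ∨ B.ncard = 2)
    (e : Fin (k+1) → Fin m) (he : StrictMono e)
    (henum : ∀ i : Fin m,
      ((∀ j, α j = α i → j = i) ∧
        ¬ ∃ p r : Fin m, p < i ∧ i < r ∧ p ≠ r ∧ α p = α r) ↔ ∃ j, e j = i) :
    ((List.ofFn (jmTuple α)).prod) (jmTop n) = α (e (Fin.last k)) ∧
    (∀ j : Fin k, ((List.ofFn (jmTuple α)).prod) (α (e j.succ)) = α (e j.castSucc)) ∧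
    ((List.ofFn (jmTuple α)).prod) (α (e 0)) = jmTop n := by
  have hT : AtMostTwice α :=
    atMostTwice_of_eqPartition fun B hB => by rcases hsize B hB with h | h <;> omega
  have hX := pairsNoncrossing_of_noncrossing hT hnc
  have hsingle : ∀ j, IsNonInnerSingleton α (e j) := fun j => (henum _).2 ⟨j, rfl⟩
  have henum' : ∀ x, IsNonInnerSingleton α x → ∃ j, e j = x := fun x => (henum x).1
  refine ⟨swapProd_apply_top_of_last hα hT hX (hsingle _) ?_,
    fun j => swapProd_apply_of_consecutive hα hT hX (hsingle _) (hsingle _)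
      (he Fin.castSucc_lt_succ) ?_,
    swapProd_apply_of_first hα hT hX (hsingle 0) ?_⟩
  · rintro x hx hxo
    obtain ⟨j', rfl⟩ := henum' x hxo
    exact (he.lt_iff_lt.1 hx).not_ge (Fin.le_last j')
  · rintro x hx₁ hx₂ hxo
    obtain ⟨j', rfl⟩ := henum' x hxo
    have h₁ := he.lt_iff_lt.1 hx₁
    have h₂ := he.lt_iff_lt.1 hx₂
    simp only [Fin.lt_def, Fin.val_succ, Fin.val_castSucc] at h₁ h₂
    omega
  · rintro x hx hxo
    obtain ⟨j', rfl⟩ := henum' x hxo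
    exact (he.lt_iff_lt.1 hx).not_ge (Fin.zero_le j')

end JM
end
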